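/- arXiv:2212.01787 — 6 statements merged into one kernel-verified Lean document; each statement's English description precedes it below -/
import Mathlib

section
/- Let M be a sharp saturated (commutative) monoid and n an element of the groupification M^gp with n ∉ M. Then the saturation of the submonoid of M^gp generated by M and -n is sharp (i.e., its only unit is 0). -/
/-- `η : M →+ G` exhibits the abelian group `G` as the groupification of the
commutative monoid `M`. -/
def IsGroupification {M G : Type*} [AddCommMonoid M] [AddCommGroup G] (η : M →+ G) : Prop :=
  (∀ x : G, ∃ a b : M, x = η a - η b) ∧
  (∀ a b : M, η a = η b ↔ ∃ k : M, a + k = b + k)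

/-- A commutative monoid is sharp if its unit group is trivial. -/
def IsSharp (M : Type*) [AddCommMonoid M] : Prop := ∀ x : M, IsAddUnit x → x = 0

/-- A morphism of monoids is local if the preimage of the unit group is the unit group. -/
def IsLocalMonoidHom {N M : Type*} [AddCommMonoid N] [AddCommMonoid M] (f : N →+ M) : Prop :=
  ∀ n : N, IsAddUnit (f n) → IsAddUnit n

/-- `(P, iM, iL)` is the push-out `M ⊔_N L` of `f : N →+ M` and `g : N →+ L` in the
category of commutative monoids. -/
def IsMonPushout {N M L P : Type*} [AddCommMonoid N] [AddCommMonoid M] [AddCommMonoid L]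
    [AddCommMonoid P] (f : N →+ M) (g : N →+ L) (iM : M →+ P) (iL : L →+ P) : Prop :=
  iM.comp f = iL.comp g ∧
  ∀ (Q : Type*) [AddCommMonoid Q] (jM : M →+ Q) (jL : L →+ Q),
    jM.comp f = jL.comp g → ∃! h : P →+ Q, h.comp iM = jM ∧ h.comp iL = jL

/-- The saturation of a subset `P` of an abelian group `G`:
`P^sat = { x ∈ G | ∃ a ≥ 1, a • x ∈ P }`. -/
def saturationOf {G : Type*} [AddCommGroup G] (P : Set G) : Set G :=
  {x : G | ∃ a : ℕ, 0 < a ∧ a • x ∈ P}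

/-- Let `M` be a sharp saturated submonoid of its groupification `G` (i.e. `G` is generated
as a group by `M`), and let `n ∈ G = M^gp` with `n ∉ M`.  Then the saturation of the
submonoid of `M^gp` generated by `M` and `-n` is sharp: its only unit is `0`. -/
theorem stmt0 {G : Type*} [AddCommGroup G] (M : AddSubmonoid G)
    (hgen : AddSubgroup.closure (M : Set G) = ⊤)
    (hsharp : ∀ x ∈ M, -x ∈ M → x = 0)
    (hsat : ∀ x : G, (∃ a : ℕ, 0 < a ∧ a • x ∈ M) → x ∈ M)
    (n : G) (hn : n ∉ M) :
    ∀ x ∈ saturationOf (↑(AddSubmonoid.closure ((M : Set G) ∪ {-n})) : Set G),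
      -x ∈ saturationOf (↑(AddSubmonoid.closure ((M : Set G) ∪ {-n})) : Set G) → x = 0 := by

  intro x hx hnx
  -- membership in the closure means `m + k • (-n)`
  have mem_cl : ∀ y : G, y ∈ AddSubmonoid.closure ((M : Set G) ∪ {-n}) →
      ∃ m ∈ M, ∃ k : ℕ, y = m + k • (-n) := by
    intro y hy
    rw [AddSubmonoid.closure_union, AddSubmonoid.closure_eq, AddSubmonoid.mem_sup] at hy
    obtain ⟨m, hm, z, hz, hmz⟩ := hy
    rw [AddSubmonoid.mem_closure_singleton] at hz
    obtain ⟨k, hk⟩ := hz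
    exact ⟨m, hm, k, by rw [← hmz, hk]⟩
  obtain ⟨a, ha, hax⟩ := hx
  obtain ⟨b, hb, hbx⟩ := hnx
  obtain ⟨m₁, hm₁, k₁, hk₁⟩ := mem_cl _ hax
  obtain ⟨m₂, hm₂, k₂, hk₂⟩ := mem_cl _ hbx
  have key : (b * k₁ + a * k₂) • n = b • m₁ + a • m₂ := by
    have h1 : b • (a • x) = b • m₁ + (b * k₁) • (-n) := by
      rw [hk₁, smul_add, smul_smul]
    have h2 : a • (b • (-x)) = a • m₂ + (a * k₂) • (-n) := by
      rw [hk₂, smul_add, smul_smul]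
    have h3 : b • (a • x) + a • (b • (-x)) = 0 := by
      rw [smul_neg, smul_neg, smul_smul, smul_smul, mul_comm a b, add_neg_cancel]
    rw [h1, h2] at h3
    have := congrArg (· + (b * k₁ + a * k₂) • n) h3
    simp only [zero_add] at this
    rw [← this, add_smul, smul_neg, smul_neg]
    abel
  rcases Nat.eq_zero_or_pos (b * k₁ + a * k₂) with hzero | hpos
  · -- k₁ = k₂ = 0
    have hk1z : k₁ = 0 := by
      rcases Nat.add_eq_zero.mp hzero with ⟨h1, _⟩
      exact (Nat.mul_eq_zero.mp h1).resolve_left hb.ne'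
    have hk2z : k₂ = 0 := by
      rcases Nat.add_eq_zero.mp hzero with ⟨_, h2⟩
      exact (Nat.mul_eq_zero.mp h2).resolve_left ha.ne'
    have hxM : x ∈ M := hsat x ⟨a, ha, by rw [hk₁, hk1z]; simpa using hm₁⟩
    have hnxM : -x ∈ M := hsat (-x) ⟨b, hb, by rw [hk₂, hk2z]; simpa using hm₂⟩
    exact hsharp x hxM hnxM
  · exfalso
    apply hn
    apply hsat
    exact ⟨b * k₁ + a * k₂, hpos, key ▸ M.add_mem (M.nsmul_mem hm₁ b) (M.nsmul_mem hm₂ a)⟩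
end

section
/- Let M be a fine monoid (integral and finitely generated) and K a field. Then the saturation M^sat of M inside M^gp is a finitely generated monoid. -/
theorem AddMonoidHom.finite_preimage_of_finite_ker {G H : Type*} [AddGroup G] [AddGroup H]
    (f : G →+ H) (hf : (f.ker : Set G).Finite) {s : Set H} (hs : s.Finite) :
    (f ⁻¹' s).Finite := by
  refine hs.preimage' fun b _ => ?_
  rcases (f ⁻¹' {b}).eq_empty_or_nonempty with h | ⟨x, hx⟩
  · simp [h]
  · refine (hf.image (x + ·)).subset fun y hy => ⟨-x + y, ?_, by simp⟩
    simp_all [mem_ker]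

theorem AddCommGroup.exists_finite_ker_to_int_pi (G : Type*) [AddCommGroup G] [AddGroup.FG G] :
    ∃ (n : ℕ) (e : G →+ (Fin n → ℤ)), (e.ker : Set G).Finite := by
  have : Module.Finite ℤ G := Module.Finite.iff_addGroup_fg.2 inferInstance
  let τ := Submodule.torsion ℤ G
  have : Module.Free ℤ (G ⧸ τ) := Module.free_of_finite_type_torsion_free'
  let b := Module.finBasis ℤ (G ⧸ τ)
  refine ⟨_, ((Finsupp.lcoeFun.comp b.repr.toLinearMap).comp τ.mkQ).toAddMonoidHom, ?_⟩
  have : Finite τ := Module.finite_of_fg_torsion τ (Submodule.torsion_isTorsion)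
  convert (τ : Set G).toFinite
  ext x; simp [AddMonoidHom.mem_ker, τ]

theorem abs_le_sum_abs_of_nsmul_eq_sum {α ι : Type*} [AddCommGroup α] [LinearOrder α]
    [IsOrderedAddMonoid α] {s : Finset ι} {a : ℕ} {r : ι → ℕ} {v : α} {w : ι → α}
    (ha : 0 < a) (hr : ∀ i ∈ s, r i ≤ a) (h : a • v = ∑ i ∈ s, r i • w i) :
    |v| ≤ ∑ i ∈ s, |w i| := by
  refine (nsmul_le_nsmul_iff_right ha.ne').1 ?_
  calc a • |v| = |∑ i ∈ s, r i • w i| := by rw [← h, abs_nsmul]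
    _ ≤ ∑ i ∈ s, r i • |w i| := by
      refine (Finset.abs_sum_le_sum_abs _ _).trans_eq ?_
      simp only [abs_nsmul]
    _ ≤ ∑ i ∈ s, a • |w i| :=
      Finset.sum_le_sum fun i hi => nsmul_le_nsmul_left (abs_nonneg _) (hr i hi)
    _ = a • ∑ i ∈ s, |w i| := Finset.smul_sum.symm

namespace AddSubmonoid

variable {G : Type*} [AddCommGroup G]

def nsmulSaturation (N : AddSubmonoid G) : AddSubmonoid G where
  carrier := saturationOf (N : Set G)
  zero_mem' := ⟨1, one_pos, by simp⟩
  add_mem' := by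
    rintro x y ⟨a, ha, hax⟩ ⟨b, hb, hby⟩
    refine ⟨a * b, Nat.mul_pos ha hb, ?_⟩
    rw [smul_add, mul_comm, mul_smul, mul_comm, mul_smul]
    exact N.add_mem (N.nsmul_mem hax b) (N.nsmul_mem hby a)

theorem le_nsmulSaturation (N : AddSubmonoid G) : N ≤ N.nsmulSaturation :=
  fun x hx => ⟨1, one_pos, by simpa using hx⟩

/-- The points `∑ tᵢ • gᵢ` with rational `tᵢ ∈ [0, 1]` of the zonotope spanned by `T`,
with the denominators cleared. -/
def zonotopePoints (T : Finset G) : Set G :=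
  {y | ∃ a : ℕ, 0 < a ∧ ∃ r : G → ℕ, (∀ g ∈ T, r g ≤ a) ∧ a • y = ∑ g ∈ T, r g • g}

theorem zonotopePoints_subset_nsmulSaturation (T : Finset G) :
    zonotopePoints T ⊆ (closure (T : Set G)).nsmulSaturation := by
  rintro y ⟨a, ha, r, -, hy⟩
  exact ⟨a, ha, hy ▸ sum_mem _ fun g hg => nsmul_mem (subset_closure hg) _⟩

theorem zonotopePoints_finite [AddGroup.FG G] (T : Finset G) : (zonotopePoints T).Finite := by
  obtain ⟨n, e, he⟩ := AddCommGroup.exists_finite_ker_to_int_pi G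
  let B : Fin n → ℤ := fun j => ∑ g ∈ T, |e g j|
  refine (e.finite_preimage_of_finite_ker he (Set.finite_Icc (-B) B)).subset ?_
  rintro y ⟨a, ha, r, hr, hy⟩
  have hbound : ∀ j, |e y j| ≤ B j := fun j =>
    abs_le_sum_abs_of_nsmul_eq_sum ha hr (by simpa using congrFun (congrArg e hy) j)
  exact ⟨fun j => neg_le_of_abs_le (hbound j), fun j => le_of_abs_le (hbound j)⟩

theorem nsmulSaturation_closure_le (T : Finset G) :
    (closure (T : Set G)).nsmulSaturation ≤ closure (zonotopePoints T ∪ T) := by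
  rintro x ⟨a, ha, hax⟩
  obtain ⟨c, -, hc⟩ := mem_closure_finset.1 hax
  let y := x - ∑ g ∈ T, (c g / a) • g
  have hy : y ∈ zonotopePoints T := by
    refine ⟨a, ha, fun g => c g % a, fun g _ => (Nat.mod_lt _ ha).le, ?_⟩
    have hsplit : a • x = ∑ g ∈ T, (a * (c g / a)) • g + ∑ g ∈ T, (c g % a) • g := by
      simp only [← hc, ← Finset.sum_add_distrib, ← add_nsmul, Nat.div_add_mod]
    simp only [y, smul_sub, hsplit, Finset.smul_sum, mul_nsmul', add_sub_cancel_left]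
  have hx : x = y + ∑ g ∈ T, (c g / a) • g := by simp [y]
  rw [hx]
  exact add_mem (subset_closure (Set.mem_union_left _ hy))
    (sum_mem _ fun g hg => nsmul_mem (subset_closure (Set.mem_union_right _ hg)) _)

theorem FG.nsmulSaturation [AddGroup.FG G] {N : AddSubmonoid G} (hN : N.FG) :
    N.nsmulSaturation.FG := by
  classical
  obtain ⟨T, rfl⟩ := hN
  refine ⟨(zonotopePoints_finite T).toFinset ∪ T, le_antisymm ?_ ?_⟩
  · rw [closure_le, Finset.coe_union, Set.Finite.coe_toFinset]
    exact Set.union_subset (zonotopePoints_subset_nsmulSaturation T)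
      (subset_closure.trans (le_nsmulSaturation _))
  · simpa using nsmulSaturation_closure_le T

end AddSubmonoid

theorem AddGroup.fg_of_forall_eq_sub {M G : Type*} [AddCommMonoid M] [AddMonoid.FG M]
    [AddCommGroup G] (η : M →+ G) (h : ∀ x : G, ∃ a b : M, x = η a - η b) : AddGroup.FG G :=
  AddGroup.fg_iff_addMonoid_fg.2 <| AddMonoid.fg_of_surjective (η.coprod (-η)) fun x => by
    obtain ⟨a, b, rfl⟩ := h x
    exact ⟨(a, b), by simp [sub_eq_add_neg]⟩

theorem stmt1_general {M G : Type*} [AddCommMonoid M] [AddCommGroup G]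
    (η : M →+ G) (hgp : IsGroupification η)
    (hfg : AddMonoid.FG M) :
    ∃ S : Finset G,
      (↑(AddSubmonoid.closure (S : Set G)) : Set G) =
        saturationOf (↑(AddMonoidHom.mrange η) : Set G) := by
  have : AddGroup.FG G := AddGroup.fg_of_forall_eq_sub η hgp.1
  have hrange : (AddMonoidHom.mrange η).FG := by
    rw [AddMonoidHom.mrange_eq_map]
    exact hfg.fg_top.map η
  obtain ⟨S, hS⟩ := hrange.nsmulSaturation
  exact ⟨S, congrArg SetLike.coe hS⟩

/-- Let `M` be a fine monoid (integral and finitely generated) and `K` a field.  Then the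
saturation `M^sat` of `M` inside its groupification `M^gp` is a finitely generated monoid. -/
theorem stmt1 {M G : Type*} [AddCommMonoid M] [AddCommGroup G] (K : Type*) [Field K]
    (η : M →+ G) (hgp : IsGroupification η) (hinj : Function.Injective η)
    (hfg : AddMonoid.FG M) :
    ∃ S : Finset G,
      (↑(AddSubmonoid.closure (S : Set G)) : Set G) =
        saturationOf (↑(AddMonoidHom.mrange η) : Set G) :=
  stmt1_general η hgp hfg
end

section
/- Let L, M, N be sharp commutative monoids and f : N → M, g : N → L local morphisms of monoids. Let P = M ⊔_N L be the push-out, with natural maps i_M : M → P, i_L : L → P, and π : M × L → P induced by i_M and i_L. Then i_M, i_L, and π are local morphisms, and P is sharp. -/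
/-! ### Auxiliary: the indicator monoid `PropM` -/

def PropM := Prop

instance : Zero PropM := ⟨False⟩
instance : Add PropM := ⟨Or⟩

instance : AddCommMonoid PropM where
  add_assoc a b c := propext or_assoc
  zero_add a := false_or a
  add_zero a := or_false a
  add_comm a b := propext or_comm
  nsmul := nsmulRec

lemma PropM.not_of_isAddUnit {x : PropM} (h : IsAddUnit x) : ¬ (x : Prop) := by
  obtain ⟨u, rfl⟩ := h
  have h2 : (u : PropM) + (-u : AddUnits PropM) = 0 := u.add_neg
  intro hx
  have h3 : ((u : PropM) ∨ ((-u : AddUnits PropM) : PropM)) = (False : Prop) := h2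
  exact h3 ▸ Or.inl hx

open Classical in
/-- The indicator homomorphism `m ↦ ¬ IsAddUnit m`. -/
noncomputable def indHom (M : Type*) [AddCommMonoid M] : M →+ PropM where
  toFun m := (¬ IsAddUnit m : Prop)
  map_zero' := by
    show (¬ IsAddUnit (0 : M)) = (False : Prop)
    simp [isAddUnit_zero]
  map_add' a b := by
    show (¬ IsAddUnit (a + b)) = ((¬ IsAddUnit a) ∨ (¬ IsAddUnit b))
    rw [(AddCommute.all a b).isAddUnit_add_iff]
    exact propext not_and_or

/-! ### Auxiliary: extending characters of the unit group -/

/-- Extend a character of the unit group of `P` to a function from `P` to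
`ℚ/ℤ ∪ {∞}` by sending every non-unit to the absorbing element `∞`. -/
noncomputable def extCharFun {P : Type*} [AddCommMonoid P]
    (φ : AddUnits P →+ AddCircle (1 : ℚ)) (p : P) : WithTop (AddCircle (1 : ℚ)) :=
  @dite _ (IsAddUnit p) (Classical.dec _)
    (fun hp => ((φ hp.addUnit : AddCircle (1 : ℚ)) : WithTop _)) (fun _ => ⊤)

lemma extCharFun_of_isAddUnit {P : Type*} [AddCommMonoid P]
    (φ : AddUnits P →+ AddCircle (1 : ℚ)) {p : P} (hp : IsAddUnit p) :
    extCharFun φ p = ((φ hp.addUnit : AddCircle (1 : ℚ)) : WithTop _) := by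
  unfold extCharFun
  exact dif_pos hp

lemma extCharFun_of_not_isAddUnit {P : Type*} [AddCommMonoid P]
    (φ : AddUnits P →+ AddCircle (1 : ℚ)) {p : P} (hp : ¬ IsAddUnit p) :
    extCharFun φ p = ⊤ := by
  unfold extCharFun
  exact dif_neg hp

/-- `extCharFun` as a monoid homomorphism. -/
noncomputable def extChar {P : Type*} [AddCommMonoid P]
    (φ : AddUnits P →+ AddCircle (1 : ℚ)) : P →+ WithTop (AddCircle (1 : ℚ)) where
  toFun := extCharFun φ
  map_zero' := by
    rw [extCharFun_of_isAddUnit φ isAddUnit_zero]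
    have h0 : (isAddUnit_zero : IsAddUnit (0 : P)).addUnit = 0 := by
      apply AddUnits.ext
      simp
    rw [h0, map_zero]
    rfl
  map_add' p q := by
    show extCharFun φ (p + q) = extCharFun φ p + extCharFun φ q
    by_cases hp : IsAddUnit p
    · by_cases hq : IsAddUnit q
      · rw [extCharFun_of_isAddUnit φ (hp.add hq), extCharFun_of_isAddUnit φ hp,
          extCharFun_of_isAddUnit φ hq]
        have hadd : (hp.add hq).addUnit = hp.addUnit + hq.addUnit := by
          apply AddUnits.ext
          simp
        rw [hadd, map_add, WithTop.coe_add]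
      · rw [extCharFun_of_not_isAddUnit φ hq,
          extCharFun_of_not_isAddUnit φ (fun h => hq (isAddUnit_of_add_isAddUnit_right h))]
        exact (WithTop.add_top _).symm
    · rw [extCharFun_of_not_isAddUnit φ hp,
        extCharFun_of_not_isAddUnit φ (fun h => hp (isAddUnit_of_add_isAddUnit_left h))]
      exact (WithTop.top_add _).symm

lemma extChar_of_not_isAddUnit {P : Type*} [AddCommMonoid P]
    (φ : AddUnits P →+ AddCircle (1 : ℚ)) {p : P} (hp : ¬ IsAddUnit p) :
    extChar φ p = ⊤ := extCharFun_of_not_isAddUnit φ hp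

lemma extChar_of_isAddUnit {P : Type*} [AddCommMonoid P]
    (φ : AddUnits P →+ AddCircle (1 : ℚ)) {p : P} (hp : IsAddUnit p) :
    extChar φ p = ((φ hp.addUnit : AddCircle (1 : ℚ)) : WithTop _) :=
  extCharFun_of_isAddUnit φ hp

/-- Let `L, M, N` be sharp commutative monoids and `f : N → M`, `g : N → L` local
morphisms.  Let `P = M ⊔_N L` be the push-out with natural maps `iM, iL`, and
`π : M × L → P` the induced map.  Then `iM`, `iL`, and `π` are local, and `P` is sharp. -/
theorem stmt5 {N M L P : Type*} [AddCommMonoid N] [AddCommMonoid M] [AddCommMonoid L]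
    [AddCommMonoid P]
    (hNs : IsSharp N) (hMs : IsSharp M) (hLs : IsSharp L)
    (f : N →+ M) (g : N →+ L) (hf : IsLocalMonoidHom f) (hg : IsLocalMonoidHom g)
    (iM : M →+ P) (iL : L →+ P) (hpo : IsMonPushout f g iM iL) :
    IsLocalMonoidHom iM ∧ IsLocalMonoidHom iL ∧
      IsLocalMonoidHom (iM.comp (AddMonoidHom.fst M L) + iL.comp (AddMonoidHom.snd M L)) ∧
      IsSharp P := by
  classical
  obtain ⟨hcomm, hup⟩ := hpo
  -- the universal property for `Type 0` test monoids, via `ULift`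
  have hup0 : ∀ (Q : Type) [AddCommMonoid Q] (jM : M →+ Q) (jL : L →+ Q),
      jM.comp f = jL.comp g →
      ∃! h : P →+ Q, h.comp iM = jM ∧ h.comp iL = jL := by
    intro Q _ jM jL hj
    set e : ULift Q ≃+ Q := AddEquiv.ulift
    obtain ⟨h, ⟨h1, h2⟩, hu⟩ := hup (ULift Q)
      ((e.symm.toAddMonoidHom).comp jM) ((e.symm.toAddMonoidHom).comp jL)
      (by rw [AddMonoidHom.comp_assoc, AddMonoidHom.comp_assoc, hj])
    refine ⟨(e.toAddMonoidHom).comp h, ⟨?_, ?_⟩, ?_⟩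
    · rw [AddMonoidHom.comp_assoc, h1, ← AddMonoidHom.comp_assoc]
      ext m; simp [e]
    · rw [AddMonoidHom.comp_assoc, h2, ← AddMonoidHom.comp_assoc]
      ext l; simp [e]
    · rintro h' ⟨h1', h2'⟩
      have heq : (e.symm.toAddMonoidHom).comp h' = h := by
        apply hu
        constructor
        · rw [AddMonoidHom.comp_assoc, h1']
        · rw [AddMonoidHom.comp_assoc, h2']
      ext x
      have := DFunLike.congr_fun heq x
      have h3 : e (e.symm (h' x)) = e (h x) := congrArg e this
      simpa using h3
  -- indicator maps agree on N
  have hind : (indHom M).comp f = (indHom L).comp g := by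
    ext n
    show (¬ IsAddUnit (f n)) = (¬ IsAddUnit (g n) : Prop)
    have h1 : IsAddUnit (f n) ↔ IsAddUnit n := ⟨hf n, fun h => h.map f⟩
    have h2 : IsAddUnit (g n) ↔ IsAddUnit n := ⟨hg n, fun h => h.map g⟩
    exact propext ((not_congr (h1.trans h2.symm)))
  obtain ⟨h, ⟨hhM, hhL⟩, -⟩ := hup0 PropM (indHom M) (indHom L) hind
  have locM : IsLocalMonoidHom iM := by
    intro m hm
    have he : h (iM m) = indHom M m := DFunLike.congr_fun hhM m
    have hu := PropM.not_of_isAddUnit (hm.map h)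
    rw [he] at hu
    exact not_not.mp hu
  have locL : IsLocalMonoidHom iL := by
    intro l hl
    have he : h (iL l) = indHom L l := DFunLike.congr_fun hhL l
    have hu := PropM.not_of_isAddUnit (hl.map h)
    rw [he] at hu
    exact not_not.mp hu
  have locPi : IsLocalMonoidHom
      (iM.comp (AddMonoidHom.fst M L) + iL.comp (AddMonoidHom.snd M L)) := by
    intro n hn
    have hval : (iM.comp (AddMonoidHom.fst M L) + iL.comp (AddMonoidHom.snd M L)) n
        = iM n.1 + iL n.2 := rfl
    rw [hval] at hn
    have h1 : IsAddUnit (iM n.1) := isAddUnit_of_add_isAddUnit_left hn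
    have h2 : IsAddUnit (iL n.2) :=
      isAddUnit_of_add_isAddUnit_left (add_comm (iM n.1) (iL n.2) ▸ hn)
    have hu1 : IsAddUnit n.1 := locM n.1 h1
    have hu2 : IsAddUnit n.2 := locL n.2 h2
    have hsum : IsAddUnit ((n.1, 0) + ((0 : M), n.2)) :=
      (hu1.map (AddMonoidHom.inl M L)).add (hu2.map (AddMonoidHom.inr M L))
    simpa using hsum
  refine ⟨locM, locL, locPi, ?_⟩
  -- Sharpness of `P`
  intro x hx
  -- Show all characters of the unit group vanish on the unit corresponding to `x`.
  have key : ∀ φ : AddUnits P →+ AddCircle (1 : ℚ), φ hx.addUnit = 0 := by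
    intro φ
    -- the two extensions have the same restrictions to `M` and `L`
    have hresM : (extChar φ).comp iM = (extChar (0 : AddUnits P →+ _)).comp iM := by
      ext m
      show extChar φ (iM m) = extChar 0 (iM m)
      by_cases hm : IsAddUnit (iM m)
      · have hm0 : m = 0 := hMs m (locM m hm)
        subst hm0
        rw [map_zero, map_zero, map_zero]
      · rw [extChar_of_not_isAddUnit _ hm, extChar_of_not_isAddUnit _ hm]
    have hresL : (extChar φ).comp iL = (extChar (0 : AddUnits P →+ _)).comp iL := by
      ext l
      show extChar φ (iL l) = extChar 0 (iL l)
      by_cases hl : IsAddUnit (iL l)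
      · have hl0 : l = 0 := hLs l (locL l hl)
        subst hl0
        rw [map_zero, map_zero, map_zero]
      · rw [extChar_of_not_isAddUnit _ hl, extChar_of_not_isAddUnit _ hl]
    have hcompat : ((extChar φ).comp iM).comp f = ((extChar φ).comp iL).comp g := by
      rw [AddMonoidHom.comp_assoc, AddMonoidHom.comp_assoc, hcomm]
    obtain ⟨h0, -, huniq⟩ := hup0 (WithTop (AddCircle (1 : ℚ)))
      ((extChar φ).comp iM) ((extChar φ).comp iL) hcompat
    have e1 : extChar φ = h0 := huniq _ ⟨rfl, rfl⟩
    have e2 : extChar (0 : AddUnits P →+ _) = h0 := huniq _ ⟨hresM.symm, hresL.symm⟩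
    have hxx : extChar φ x = extChar (0 : AddUnits P →+ _) x := by rw [e1, e2]
    rw [extChar_of_isAddUnit _ hx, extChar_of_isAddUnit _ hx] at hxx
    have := WithTop.coe_injective hxx
    simpa using this
  have hu0 : hx.addUnit = 0 := by
    apply CharacterModule.eq_zero_of_character_apply
    intro c
    exact key c
  have : ((hx.addUnit : AddUnits P) : P) = x := hx.addUnit_spec
  rw [← this, hu0]
  rfl
end

section
/- Let M, N be sharp fs monoids and i₁, i₂ : N → M local morphisms of monoids, neither of which is injective. Then there exists a sharp fs monoid L with N ⊆ L ⊆ N^gp such that neither push-out M ⊔_{i₁, N} L nor M ⊔_{i₂, N} L (where N → L is the inclusion) is quasi-integral. -/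
open Finset Function

section PointedCone

variable {ι E : Type*} [AddCommGroup E] {v : ι → E} {s s' : Finset ι}

/-- The vectors `v i`, `i ∈ s`, are nonzero and span a pointed cone. -/
def HasNoNonnegRelation (v : ι → E) (s : Finset ι) : Prop :=
  ∀ t : ι → ℤ, (∀ i ∈ s, 0 ≤ t i) → ∑ i ∈ s, t i • v i = 0 → ∀ i ∈ s, t i = 0

namespace HasNoNonnegRelation

theorem mono (h : HasNoNonnegRelation v s') (hss : s ⊆ s') : HasNoNonnegRelation v s := by
  classical
  intro t ht hrel i hi
  let t' : ι → ℤ := fun j => if j ∈ s then t j else 0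
  have hrel' : ∑ j ∈ s', t' j • v j = 0 := by
    rw [← sum_subset hss fun j _ hj => by simp [t', hj]]
    simpa [t'] using hrel
  have ht' : ∀ j ∈ s', 0 ≤ t' j := fun j _ => by by_cases hj : j ∈ s <;> simp [t', hj, ht]
  simpa [t', hi] using h t' ht' hrel' i (hss hi)

theorem ne_zero (h : HasNoNonnegRelation v s) {i : ι} (hi : i ∈ s) : v i ≠ 0 := by
  classical
  intro hvi
  have := h (fun j => if j = i then 1 else 0) (fun j _ => by split_ifs <;> simp)
    (by simp [ite_smul, hi, hvi]) i hi
  simp at this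

/-- Projecting along `v a` into `ker ψ` preserves pointedness. -/
theorem sub_smul_insert [DecidableEq ι] {a : ι} {ψ : E →+ ℤ}
    (h : HasNoNonnegRelation v (insert a s)) (ha : a ∉ s) (hψ : ∀ i ∈ s, 0 < ψ (v i))
    (hψa : ψ (v a) ≤ 0) :
    HasNoNonnegRelation (fun i => ψ (v a) • v i - ψ (v i) • v a) s := by
  intro t ht hrel
  set A := ∑ i ∈ s, t i * ψ (v i)
  have hA : A = 0 := by
    let t' : ι → ℤ := fun i => if i = a then A else -ψ (v a) * t i
    have hs : ∀ i ∈ s, t' i = -ψ (v a) * t i := fun i hi => if_neg (ne_of_mem_of_not_mem hi ha)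
    have ht' : ∀ i ∈ insert a s, 0 ≤ t' i := by
      intro i hi
      rcases mem_insert.1 hi with rfl | hi
      · simpa [t'] using sum_nonneg fun i hi => mul_nonneg (ht i hi) (hψ i hi).le
      · rw [hs i hi]; exact mul_nonneg (by linarith) (ht i hi)
    have hrel' : ∑ i ∈ insert a s, t' i • v i = 0 := by
      rw [sum_insert ha, sum_congr rfl fun i hi => by rw [hs i hi]]
      simp only [smul_sub, sum_sub_distrib, smul_smul] at hrel
      simp only [t', if_pos rfl, A, sum_smul, neg_mul, neg_smul, sum_neg_distrib]
      rw [← neg_eq_zero, ← hrel]; simp only [mul_comm]; abel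
    simpa [t'] using h t' ht' hrel' a (mem_insert_self a s)
  intro i hi
  have := (sum_eq_zero_iff_of_nonneg fun j hj => mul_nonneg (ht j hj) (hψ j hj).le).1 hA i hi
  exact (mul_eq_zero.1 this).resolve_right (hψ i hi).ne'

theorem exists_of_not_insert [DecidableEq ι] {a : ι}
    (h : HasNoNonnegRelation v s) (ha : a ∉ s) (h' : ¬ HasNoNonnegRelation v (insert a s)) :
    ∃ t : ι → ℤ, (∀ i ∈ s, 0 ≤ t i) ∧ 0 < t a ∧ ∑ i ∈ s, t i • v i + t a • v a = 0 := by
  simp only [HasNoNonnegRelation, not_forall, exists_prop] at h'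
  obtain ⟨t, ht, hrel, i, hi, hti⟩ := h'
  rw [sum_insert ha, add_comm] at hrel
  have hts : ∀ j ∈ s, 0 ≤ t j := fun j hj => ht j (mem_insert_of_mem hj)
  refine ⟨t, hts, (ht a (mem_insert_self a s)).lt_of_ne fun hta => ?_, hrel⟩
  rw [← hta, zero_smul, add_zero] at hrel
  rcases mem_insert.1 hi with rfl | hi
  · exact hti hta.symm
  · exact hti (h t hts hrel i hi)

theorem insert_or_insert_neg [IsAddTorsionFree E] [DecidableEq E] {s : Finset E}
    (h : HasNoNonnegRelation id s) {x : E} (hx : x ≠ 0) :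
    HasNoNonnegRelation id (insert x s) ∨ HasNoNonnegRelation id (insert (-x) s) := by
  by_contra! hcon
  have hxs : x ∉ s := fun hxs => hcon.1 (by rwa [insert_eq_of_mem hxs])
  have hnxs : -x ∉ s := fun hnxs => hcon.2 (by rwa [insert_eq_of_mem hnxs])
  obtain ⟨t, ht, htx, hrel⟩ := h.exists_of_not_insert hxs hcon.1
  obtain ⟨t', ht', htx', hrel'⟩ := h.exists_of_not_insert hnxs hcon.2
  have hsum : ∑ y ∈ s, (t' (-x) * t y + t x * t' y) • id y = 0 := by
    simp only [id, add_smul, sum_add_distrib, ← smul_smul, ← smul_sum] at hrel hrel' ⊢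
    linear_combination (norm := module) t' (-x) • hrel + t x • hrel'
  have ht0 : ∀ y ∈ s, t y = 0 := by
    intro y hy
    have := h _ (fun y hy => by have := ht y hy; have := ht' y hy; positivity) hsum y hy
    nlinarith [ht y hy, ht' y hy]
  rw [sum_eq_zero fun y hy => by rw [ht0 y hy, zero_smul], zero_add] at hrel
  exact hx ((smul_eq_zero.1 hrel).resolve_left htx.ne')

theorem exists_sub_insert {N G X : Type*} [AddCommGroup G] [IsAddTorsionFree G] [DecidableEq G]
    {s : Finset G} (hs : HasNoNonnegRelation id s) {η : N → G} (hη : Injective η) {f : N → X}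
    (hf : ¬ Injective f) :
    ∃ a b, f a = f b ∧ a ≠ b ∧ HasNoNonnegRelation id (insert (η a - η b) s) := by
  obtain ⟨a, b, hab, hne⟩ := not_injective_iff.1 hf
  rcases hs.insert_or_insert_neg (sub_ne_zero.2 (hη.ne hne)) with h | h
  · exact ⟨a, b, hab, hne, h⟩
  · exact ⟨b, a, hab.symm, hne.symm, by rwa [neg_sub] at h⟩

end HasNoNonnegRelation

theorem exists_addMonoidHom_pos_of_ne_zero [Module.Free ℤ E] {x : E} (hx : x ≠ 0) :
    ∃ θ : E →+ ℤ, 0 < θ x := by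
  obtain ⟨f, hf⟩ := Module.Projective.exists_dual_ne_zero ℤ hx
  rcases hf.lt_or_gt with hneg | hpos
  · exact ⟨-f.toAddMonoidHom, by simpa using hneg⟩
  · exact ⟨f.toAddMonoidHom, hpos⟩

theorem exists_pos_of_apply_eq_zero {φ θ : E →+ ℤ} {x : E} (hφ : ∀ i ∈ s, 0 < φ (v i))
    (hφx : φ x = 0) (hθx : 0 < θ x) :
    ∃ w : E →+ ℤ, (∀ i ∈ s, 0 < w (v i)) ∧ 0 < w x := by
  set C : ℤ := 1 + ∑ i ∈ s, |θ (v i)|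
  refine ⟨C • φ + θ, fun i hi => ?_, by simpa [hφx] using hθx⟩
  have hθi : |θ (v i)| ≤ ∑ j ∈ s, |θ (v j)| :=
    single_le_sum (f := fun j => |θ (v j)|) (fun _ _ => abs_nonneg _) hi
  have hC : C ≤ C * φ (v i) := le_mul_of_one_le_right (by positivity) (hφ i hi)
  simp only [AddMonoidHom.add_apply, AddMonoidHom.smul_apply, smul_eq_mul]
  linarith [neg_abs_le (θ (v i))]

/-- **Gordan's theorem**, over `ℤ`. -/
theorem HasNoNonnegRelation.exists_pos [Module.Free ℤ E] (h : HasNoNonnegRelation v s) :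
    ∃ w : E →+ ℤ, ∀ i ∈ s, 0 < w (v i) := by
  classical
  induction s using Finset.induction_on generalizing v with
  | empty => exact ⟨0, by simp⟩
  | insert a s ha ih =>
    obtain ⟨ψ, hψ⟩ := ih (h.mono (subset_insert a s))
    by_cases hψa : 0 < ψ (v a)
    · exact ⟨ψ, forall_mem_insert _ _ _ |>.2 ⟨hψa, hψ⟩⟩
    obtain ⟨θ, hθ⟩ := exists_addMonoidHom_pos_of_ne_zero (h.ne_zero (mem_insert_self a s))
    obtain ⟨χ, hχ⟩ := ih (h.sub_smul_insert ha hψ (not_lt.1 hψa))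
    obtain ⟨w, hw, hwa⟩ := exists_pos_of_apply_eq_zero (φ := ψ (v a) • χ - χ (v a) • ψ)
      (fun i hi => by simpa [mul_comm] using hχ i hi) (by simp [mul_comm]) hθ
    exact ⟨w, forall_mem_insert _ _ _ |>.2 ⟨hwa, hw⟩⟩

end PointedCone

section Groupification

variable {M G : Type*} [AddCommMonoid M] [AddCommGroup G] {η : M →+ G}

theorem hasNoNonnegRelation_image [DecidableEq G] (hη : Injective η) (hM : IsSharp M)
    {s : Finset M} (hs : 0 ∉ s) : HasNoNonnegRelation id (s.image η) := by
  have := Subsingleton.addUnits_of_isAddUnit hM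
  intro t ht hrel
  rw [forall_mem_image] at ht ⊢
  rw [sum_image hη.injOn] at hrel
  have hzero : ∑ n ∈ s, (t (η n)).toNat • n = 0 := hη <| by
    rw [map_sum, map_zero, ← hrel]
    refine sum_congr rfl fun n hn => ?_
    rw [map_nsmul, ← natCast_zsmul, Int.toNat_of_nonneg (ht hn), id]
  intro n hn
  have hk : (t (η n)).toNat • n = 0 := sum_eq_zero_iff.1 hzero n hn
  by_contra htn
  exact hs (hM n (IsAddUnit.of_nsmul_eq_zero hk (by have := ht hn; omega)) ▸ hn)

theorem isAddTorsionFree_of_saturated (hη : Injective η) (hM : IsSharp M)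
    (hsat : ∀ x : G, (∃ a : ℕ, 0 < a ∧ a • x ∈ AddMonoidHom.mrange η) →
      x ∈ AddMonoidHom.mrange η) :
    IsAddTorsionFree G := by
  refine isAddTorsionFree_iff_not_isOfFinAddOrder.2 fun x hx hfin => hx ?_
  obtain ⟨k, hk, hkx⟩ := isOfFinAddOrder_iff_nsmul_eq_zero.1 hfin
  obtain ⟨m, rfl⟩ := hsat x ⟨k, hk, hkx ▸ zero_mem _⟩
  have hkm : k • m = 0 := hη (by rw [map_nsmul, hkx, map_zero])
  rw [hM m (IsAddUnit.of_nsmul_eq_zero hkm hk.ne'), map_zero]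

theorem addGroupFG_of_isGroupification (hgp : IsGroupification η) (hM : AddMonoid.FG M) :
    AddGroup.FG G := by
  classical
  obtain ⟨S, hS⟩ := hM.fg_top
  have hmem : ∀ m, η m ∈ AddSubgroup.closure (η '' S) := by
    intro m
    have : η m ∈ (AddSubmonoid.closure (S : Set M)).map η := ⟨m, hS ▸ trivial, rfl⟩
    rw [AddMonoidHom.map_mclosure] at this
    exact AddSubmonoid.closure_le.2 AddSubgroup.subset_closure this
  refine ⟨⟨S.image η, eq_top_iff.2 fun x _ => ?_⟩⟩
  obtain ⟨a, b, rfl⟩ := hgp.1 x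
  rw [coe_image]
  exact sub_mem (hmem a) (hmem b)

end Groupification

section IntegralCone

variable {G κ : Type*} [AddCommGroup G] (F : G →+ (κ → ℤ))

theorem eq_zero_of_mem_comap_nonneg_of_neg_mem (hF : Injective F) {x : G}
    (hx : x ∈ (AddSubmonoid.nonneg _).comap F) (hnx : -x ∈ (AddSubmonoid.nonneg _).comap F) :
    x = 0 := by
  simp only [AddSubmonoid.mem_comap, AddSubmonoid.mem_nonneg, map_neg, neg_nonneg] at hx hnx
  exact hF (by rw [le_antisymm hnx hx, map_zero])

theorem mem_comap_nonneg_of_nsmul_mem {x : G} {a : ℕ} (ha : 0 < a)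
    (hax : a • x ∈ (AddSubmonoid.nonneg _).comap F) : x ∈ (AddSubmonoid.nonneg _).comap F := by
  simp only [AddSubmonoid.mem_comap, AddSubmonoid.mem_nonneg, map_nsmul] at hax ⊢
  exact fun j => nonneg_of_mul_nonneg_right (by simpa using hax j) (Int.natCast_pos.2 ha)

/-- **Gordan's lemma**: this cone is isomorphic to `F(G) ∩ ℕ^κ`, a subtractive submonoid of
`ℕ^κ`. -/
theorem fg_comap_nonneg [Finite κ] (hF : Injective F) : ((AddSubmonoid.nonneg _).comap F).FG := by
  let cast : (κ → ℕ) →+ (κ → ℤ) := (Nat.castAddMonoidHom ℤ).compLeft κ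
  let P := F.range.toAddSubmonoid.comap cast
  have hP : P.FG := AddSubmonoid.fg_of_subtractive fun x hx y hxy => by
    simpa [P] using F.range.sub_mem hxy hx
  refine AddSubmonoid.FG.map_injective F hF ?_
  convert hP.map cast
  ext y
  constructor
  · rintro ⟨x, hx, rfl⟩
    exact ⟨fun j => (F x j).toNat, ⟨x, by ext j; simp [cast, Int.toNat_of_nonneg (hx j)]⟩,
      by ext j; simp [cast, Int.toNat_of_nonneg (hx j)]⟩
  · rintro ⟨n, ⟨x, hx⟩, rfl⟩
    exact ⟨x, fun j => by simp [hx, cast], hx⟩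

variable (w : G →+ ℤ) (c : G →+ (κ → ℤ))

def coneFunctionals (K : ℤ) : G →+ (Option κ → ℤ) :=
  AddMonoidHom.pi fun o => o.elim w fun j => K • w + (Pi.evalAddMonoidHom (fun _ => ℤ) j).comp c

theorem coneFunctionals_injective (hc : Injective c) (K : ℤ) :
    Injective (coneFunctionals w c K) := by
  refine (injective_iff_map_eq_zero _).2 fun x hx => hc ?_
  have hw : w x = 0 := congrFun hx none
  ext j
  simpa [coneFunctionals, hw] using congrFun hx (some j)

theorem exists_coneFunctionals_nonneg [Fintype κ] (X : Finset G) (hX : ∀ x ∈ X, 0 < w x) :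
    ∃ K, ∀ x ∈ X, 0 ≤ coneFunctionals w c K x := by
  set K := ∑ y ∈ X, ∑ j, |c y j|
  refine ⟨K, fun x hx o => ?_⟩
  cases o with
  | none => exact (hX x hx).le
  | some j =>
    have hj : |c x j| ≤ K :=
      (single_le_sum (f := fun j => |c x j|) (fun _ _ => abs_nonneg _) (mem_univ j)).trans
        (single_le_sum (f := fun y => ∑ j, |c y j|)
          (fun _ _ => sum_nonneg fun _ _ => abs_nonneg _) hx)
    have hK : K ≤ K * w x :=
      le_mul_of_one_le_right ((abs_nonneg _).trans hj) (hX x hx)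
    show 0 ≤ K * w x + c x j
    linarith [neg_abs_le (c x j)]

end IntegralCone

section Pushout

variable {N M L P : Type*} [AddCommMonoid N] [AddCommMonoid M] [AddCommMonoid L]
  [AddCommMonoid P]

open Classical in
noncomputable def IsSharp.indicator (hM : IsSharp M) : M →+ ℕ∞ where
  toFun x := if x = 0 then 0 else ⊤
  map_zero' := if_pos rfl
  map_add' x y := by
    have := Subsingleton.addUnits_of_isAddUnit hM
    by_cases hx : x = 0 <;> by_cases hy : y = 0 <;> simp [hx, hy]

theorem IsSharp.indicator_eq_zero_iff (hM : IsSharp M) {x : M} : hM.indicator x = 0 ↔ x = 0 := by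
  simp [IsSharp.indicator]

theorem IsLocalMonoidHom.map_eq_zero_iff {f : N →+ M} (hf : IsLocalMonoidHom f) (hN : IsSharp N)
    {n : N} : f n = 0 ↔ n = 0 :=
  ⟨fun h => hN n (hf n (h ▸ isAddUnit_zero)), fun h => h ▸ map_zero f⟩

theorem AddSubmonoid.isSharp {G : Type*} [AddCommGroup G] {L : AddSubmonoid G}
    (hL : ∀ x ∈ L, -x ∈ L → x = 0) : IsSharp L := by
  rintro _ ⟨u, rfl⟩
  refine Subtype.ext (hL _ (u : L).2 ?_)
  rw [neg_eq_of_add_eq_zero_right (congrArg Subtype.val u.val_neg)]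
  exact (↑(-u) : L).2

variable {f : N →+ M} {g : N →+ L} {iM : M →+ P} {iL : L →+ P}

theorem IsMonPushout.map_eq_zero (hpo : IsMonPushout f g iM iL) {a b : N} (hab : f a = f b)
    {c : L} (hc : g b + c = g a) {Pgp : Type*} [AddCommGroup Pgp] (ηP : P →+ Pgp) :
    ηP (iL c) = 0 := by
  have hsq (n : N) : iL (g n) = iM (f n) := (DFunLike.congr_fun hpo.1 n).symm
  refine add_eq_left.1 (show ηP (iL (g b)) + ηP (iL c) = ηP (iL (g b)) from ?_)
  rw [← map_add, ← map_add, hc, hsq, hsq, hab]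

theorem IsMonPushout.map_ne_zero (hpo : IsMonPushout f g iM iL) (hM : IsSharp M) (hL : IsSharp L)
    (hfg : ∀ n, f n = 0 ↔ g n = 0) {c : L} (hc : c ≠ 0) : iL c ≠ 0 := by
  let e : ℕ∞ ≃+ ULift ℕ∞ := AddEquiv.ulift.symm
  obtain ⟨h, ⟨-, hhL⟩, -⟩ := hpo.2 _ ((e : ℕ∞ →+ ULift ℕ∞).comp hM.indicator)
    ((e : ℕ∞ →+ ULift ℕ∞).comp hL.indicator) <| by
      ext n
      by_cases hn : g n = 0 <;> simp [IsSharp.indicator, hn, hfg n]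
  intro hc0
  have := DFunLike.congr_fun hhL c
  simp only [AddMonoidHom.comp_apply, hc0, map_zero, AddMonoidHom.coe_coe] at this
  exact hc (hL.indicator_eq_zero_iff.1 (e.map_eq_zero_iff.1 this.symm))

theorem exists_ne_zero_of_isMonPushout_codRestrict {G : Type*} [AddCommGroup G] {i : N →+ M}
    (hN : IsSharp N) (hM : IsSharp M) (hi : IsLocalMonoidHom i) {η : N →+ G}
    (hη : Injective η) {L : AddSubmonoid G} (hL : ∀ x ∈ L, -x ∈ L → x = 0)
    (hsub : ∀ n, η n ∈ L) {a b : N} (hab : i a = i b) (hne : a ≠ b) (hmem : η a - η b ∈ L)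
    {iM : M →+ P} {iL : L →+ P} (hpo : IsMonPushout i (η.codRestrict L hsub) iM iL)
    {Pgp : Type*} [AddCommGroup Pgp] (ηP : P →+ Pgp) : ∃ p, ηP p = 0 ∧ p ≠ 0 := by
  refine ⟨iL ⟨_, hmem⟩, hpo.map_eq_zero hab (Subtype.ext (add_sub_cancel _ _)) ηP,
    hpo.map_ne_zero hM (AddSubmonoid.isSharp hL) (fun n => ?_) ?_⟩
  · rw [hi.map_eq_zero_iff hN, ← Subtype.val_inj]
    simp [hη.eq_iff' (map_zero η)]
  · simpa [← Subtype.val_inj, sub_eq_zero] using hη.ne hne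

end Pushout

theorem stmt9_general {N M Ngp : Type*} [AddCommMonoid N] [AddCommMonoid M]
    [AddCommGroup Ngp]
    (ηN : N →+ Ngp) (hgpN : IsGroupification ηN) (hNinj : Function.Injective ηN)
    (hNsharp : IsSharp N) (hNfg : AddMonoid.FG N)
    (hNsat : ∀ x : Ngp, (∃ a : ℕ, 0 < a ∧ a • x ∈ AddMonoidHom.mrange ηN) →
      x ∈ AddMonoidHom.mrange ηN)
    (hMsharp : IsSharp M)
    (i₁ i₂ : N →+ M) (h₁loc : IsLocalMonoidHom i₁) (h₂loc : IsLocalMonoidHom i₂)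
    (h₁ : ¬ Function.Injective i₁) (h₂ : ¬ Function.Injective i₂) :
    ∃ (L : AddSubmonoid Ngp) (hsub : ∀ n : N, ηN n ∈ L),
      (∀ x : Ngp, x ∈ L → -x ∈ L → x = 0) ∧
      L.FG ∧
      (∀ x : Ngp, (∃ a : ℕ, 0 < a ∧ a • x ∈ L) → x ∈ L) ∧
      (∀ (P : Type*) [AddCommMonoid P] (iM : M →+ P) (iL : L →+ P),
        IsMonPushout i₁ (ηN.codRestrict L hsub) iM iL →
        ∀ (Pgp : Type*) [AddCommGroup Pgp] (ηP : P →+ Pgp), IsGroupification ηP →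
          ∃ p : P, ηP p = 0 ∧ p ≠ 0) ∧
      (∀ (P : Type*) [AddCommMonoid P] (iM : M →+ P) (iL : L →+ P),
        IsMonPushout i₂ (ηN.codRestrict L hsub) iM iL →
        ∀ (Pgp : Type*) [AddCommGroup Pgp] (ηP : P →+ Pgp), IsGroupification ηP →
          ∃ p : P, ηP p = 0 ∧ p ≠ 0) := by
  classical
  have := isAddTorsionFree_of_saturated hNinj hNsharp hNsat
  have := Module.Finite.iff_addGroup_fg.2 (addGroupFG_of_isGroupification hgpN hNfg)
  obtain ⟨S, hS⟩ := hNfg.fg_top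
  obtain ⟨a₁, b₁, hab₁, hne₁, hX₁⟩ := (hasNoNonnegRelation_image hNinj hNsharp
    (notMem_erase 0 S)).exists_sub_insert hNinj h₁
  obtain ⟨a₂, b₂, hab₂, hne₂, hX₂⟩ := hX₁.exists_sub_insert hNinj h₂
  obtain ⟨w, hw⟩ := hX₂.exists_pos
  let b := Module.Free.chooseBasis ℤ Ngp
  let c := b.equivFun.toAddEquiv.toAddMonoidHom
  obtain ⟨K, hK⟩ := exists_coneFunctionals_nonneg w c _ hw
  have hF := coneFunctionals_injective w c b.equivFun.injective K
  let L := (AddSubmonoid.nonneg _).comap (coneFunctionals w c K)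
  have hL : ∀ x ∈ L, -x ∈ L → x = 0 := fun x => eq_zero_of_mem_comap_nonneg_of_neg_mem _ hF
  have hsub : ∀ n, ηN n ∈ L := by
    have hS' : AddSubmonoid.closure (S : Set N) ≤ L.comap ηN := by
      refine AddSubmonoid.closure_le.2 fun m hm => ?_
      by_cases hm0 : m = 0
      · simp [hm0, L]
      · exact hK _ <| mem_insert_of_mem <| mem_insert_of_mem <|
          mem_image_of_mem _ (mem_erase.2 ⟨hm0, hm⟩)
    exact fun n => hS' (hS ▸ AddSubmonoid.mem_top n)
  refine ⟨L, hsub, hL, fg_comap_nonneg _ hF,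
    fun x ⟨a, ha, hax⟩ => mem_comap_nonneg_of_nsmul_mem _ ha hax, ?_, ?_⟩
  · intro P _ iM iL hpo Pgp _ ηP _
    exact exists_ne_zero_of_isMonPushout_codRestrict hNsharp hMsharp h₁loc hNinj hL hsub hab₁ hne₁
      (hK _ (by simp)) hpo ηP
  · intro P _ iM iL hpo Pgp _ ηP _
    exact exists_ne_zero_of_isMonPushout_codRestrict hNsharp hMsharp h₂loc hNinj hL hsub hab₂ hne₂
      (hK _ (by simp)) hpo ηP

/-- Let `M, N` be sharp fs monoids and `i₁, i₂ : N → M` local morphisms, neither of which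
is injective.  Then there exists a sharp fs monoid `L` with `N ⊆ L ⊆ N^gp` such that
neither push-out `M ⊔_{i₁,N} L` nor `M ⊔_{i₂,N} L` (along the inclusion `N ↪ L`) is
quasi-integral. -/
theorem stmt9 {N M Ngp Mgp : Type*} [AddCommMonoid N] [AddCommMonoid M]
    [AddCommGroup Ngp] [AddCommGroup Mgp]
    (ηN : N →+ Ngp) (hgpN : IsGroupification ηN) (hNinj : Function.Injective ηN)
    (hNsharp : IsSharp N) (hNfg : AddMonoid.FG N)
    (hNsat : ∀ x : Ngp, (∃ a : ℕ, 0 < a ∧ a • x ∈ AddMonoidHom.mrange ηN) →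
      x ∈ AddMonoidHom.mrange ηN)
    (ηM : M →+ Mgp) (hgpM : IsGroupification ηM) (hMinj : Function.Injective ηM)
    (hMsharp : IsSharp M) (hMfg : AddMonoid.FG M)
    (hMsat : ∀ x : Mgp, (∃ a : ℕ, 0 < a ∧ a • x ∈ AddMonoidHom.mrange ηM) →
      x ∈ AddMonoidHom.mrange ηM)
    (i₁ i₂ : N →+ M) (h₁loc : IsLocalMonoidHom i₁) (h₂loc : IsLocalMonoidHom i₂)
    (h₁ : ¬ Function.Injective i₁) (h₂ : ¬ Function.Injective i₂) :
    ∃ (L : AddSubmonoid Ngp) (hsub : ∀ n : N, ηN n ∈ L),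
      (∀ x : Ngp, x ∈ L → -x ∈ L → x = 0) ∧
      L.FG ∧
      (∀ x : Ngp, (∃ a : ℕ, 0 < a ∧ a • x ∈ L) → x ∈ L) ∧
      (∀ (P : Type*) [AddCommMonoid P] (iM : M →+ P) (iL : L →+ P),
        IsMonPushout i₁ (ηN.codRestrict L hsub) iM iL →
        ∀ (Pgp : Type*) [AddCommGroup Pgp] (ηP : P →+ Pgp), IsGroupification ηP →
          ∃ p : P, ηP p = 0 ∧ p ≠ 0) ∧
      (∀ (P : Type*) [AddCommMonoid P] (iM : M →+ P) (iL : L →+ P),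
        IsMonPushout i₂ (ηN.codRestrict L hsub) iM iL →
        ∀ (Pgp : Type*) [AddCommGroup Pgp] (ηP : P →+ Pgp), IsGroupification ηP →
          ∃ p : P, ηP p = 0 ∧ p ≠ 0) :=
  stmt9_general ηN hgpN hNinj hNsharp hNfg hNsat hMsharp i₁ i₂ h₁loc h₂loc h₁ h₂
end

section
/- The inclusion functor from the category of saturated commutative monoids into the category of all commutative monoids has a left adjoint, given by M ↦ M^sat = { m ∈ M^gp | ∃ a ≥ 1, a·m ∈ M^int }. Consequently, the limit in the category of commutative monoids of any diagram of saturated monoids is saturated. -/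
open CategoryTheory

/-- A commutative monoid is saturated: it is integral (cancellative) and, whenever
`n • a = c + n • b` for some `n ≥ 1` and some `c` (i.e. the element `a - b` of the
groupification satisfies `n • (a - b) ∈ M`), one has `a = d + b` for some `d`
(i.e. `a - b ∈ M`). -/
def SaturatedPred (M : AddCommMonCat) : Prop :=
  (∀ a b c : ↥M, a + b = a + c → b = c) ∧
  ∀ (a b : ↥M) (n : ℕ), 0 < n → (∃ c : ↥M, n • a = c + n • b) → ∃ d : ↥M, a = d + b

/-!
`M^sat` is the root closure of the image of `M` in its Grothendieck group; the root closure of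
any submonoid of a group is saturated. A homomorphism `f : M → N` into a saturated `N` extends
uniquely to `M^sat`: uniquely because every element of `M^sat` is a difference of elements of
the image of `M` and `N` is cancellative; it exists because `f^gp` sends `M^sat` into the root
closure of `N^int`, which is `N^int ≅ N` by saturation of `N`.

The statement about limits is formal: in a reflective full subcategory closed under isomorphisms,
the unit at the point of a limit cone of reflected objects is split by the map induced from the
reflected cone, so that point is itself reflected.
-/

namespace AddSubmonoid

variable {G : Type*}

def rootClosure [AddCommMonoid G] (S : AddSubmonoid G) : AddSubmonoid G where
  carrier := {x | ∃ n : ℕ, 0 < n ∧ n • x ∈ S}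
  zero_mem' := ⟨1, one_pos, by simp⟩
  add_mem' := by
    rintro x y ⟨n, hn, hx⟩ ⟨m, hm, hy⟩
    refine ⟨n * m, Nat.mul_pos hn hm, nsmul_add x y (n * m) ▸ S.add_mem ?_ ?_⟩
    · simpa only [mul_nsmul] using S.nsmul_mem hx m
    · simpa only [mul_comm n, mul_nsmul] using S.nsmul_mem hy n

theorem saturatedPred_rootClosure [AddCommGroup G] (S : AddSubmonoid G) :
    SaturatedPred (AddCommMonCat.of S.rootClosure) := by
  refine ⟨fun _ _ _ => add_left_cancel, ?_⟩
  rintro x y n hn ⟨z, hz⟩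
  obtain ⟨m, hm, hmz⟩ := z.2
  have hxy : (n • x : G) - n • y = z := sub_eq_of_eq_add (congrArg Subtype.val hz)
  refine ⟨⟨x - y, m * n, Nat.mul_pos hm hn, ?_⟩, Subtype.ext (sub_add_cancel _ _).symm⟩
  rwa [mul_comm, mul_nsmul, nsmul_sub, hxy]

end AddSubmonoid

namespace Algebra.GrothendieckAddGroup

variable {M N : Type*} [AddCommMonoid M] [AddCommMonoid N]

theorem of_eq_of_iff {a b : M} : of a = of b ↔ ∃ k : M, k + a = k + b :=
  (AddLocalization.addMonoidOf ⊤).eq_iff_exists.trans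
    ⟨fun ⟨k, h⟩ => ⟨k, h⟩, fun ⟨k, h⟩ => ⟨⟨k, trivial⟩, h⟩⟩

theorem exists_add_of_eq_of (x : GrothendieckAddGroup M) : ∃ a b : M, x + of b = of a := by
  obtain ⟨⟨a, b, _⟩, hx⟩ := (AddLocalization.addMonoidOf ⊤).surj x
  exact ⟨a, b, hx⟩

noncomputable def map (f : M →+ N) : GrothendieckAddGroup M →+ GrothendieckAddGroup N :=
  lift (of.comp f)

@[simp]
theorem map_of (f : M →+ N) (a : M) : map f (of a) = of (f a) :=
  DFunLike.congr_fun (lift.symm_apply_apply (of.comp f)) a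

end Algebra.GrothendieckAddGroup

namespace SaturatedPred

open Algebra

theorem of_addEquiv {X Y : AddCommMonCat} (e : X ≃+ Y) (hX : SaturatedPred X) :
    SaturatedPred Y := by
  refine ⟨fun a b c h => e.symm.injective (hX.1 (e.symm a) _ _ ?_), ?_⟩
  · rw [← map_add, ← map_add, h]
  · rintro a b n hn ⟨c, hc⟩
    obtain ⟨d, hd⟩ := hX.2 (e.symm a) (e.symm b) n hn ⟨e.symm c, by
      rw [← map_nsmul, ← map_nsmul, ← map_add, hc]⟩
    exact ⟨e d, by rw [← e.apply_symm_apply a, hd, map_add, e.apply_symm_apply]⟩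

instance : ObjectProperty.IsClosedUnderIsomorphisms SaturatedPred where
  of_iso e := of_addEquiv e.commMonCatIsoToAddEquiv

variable {N : AddCommMonCat} (hN : SaturatedPred N)
include hN

theorem of_injective : Function.Injective (GrothendieckAddGroup.of : N →+ _) := fun a b h => by
  obtain ⟨k, hk⟩ := GrothendieckAddGroup.of_eq_of_iff.mp h
  exact hN.1 k a b hk

theorem rootClosure_mrange_of_le :
    (AddMonoidHom.mrange (GrothendieckAddGroup.of : N →+ _)).rootClosure ≤
      AddMonoidHom.mrange GrothendieckAddGroup.of := by
  rintro y ⟨n, hn, a, ha⟩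
  obtain ⟨p, q, hy⟩ := GrothendieckAddGroup.exists_add_of_eq_of y
  have hpq : n • p = a + n • q := hN.of_injective <| by
    rw [map_nsmul, ← hy, map_add, nsmul_add, ha, map_nsmul]
  obtain ⟨d, rfl⟩ := hN.2 p q n hn ⟨a, hpq⟩
  exact ⟨d, add_right_cancel (hy.trans (map_add _ d q)).symm⟩

noncomputable def equivMrangeOf :
    N ≃+ AddMonoidHom.mrange (GrothendieckAddGroup.of : N →+ _) :=
  AddEquiv.ofBijective GrothendieckAddGroup.of.mrangeRestrict
    ⟨fun _ _ h => hN.of_injective (congrArg Subtype.val h),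
      GrothendieckAddGroup.of.mrangeRestrict_surjective⟩

end SaturatedPred

namespace Algebra.GrothendieckAddGroup

section

variable (M : Type*) [AddCommMonoid M]

abbrev sat : AddSubmonoid (GrothendieckAddGroup M) := (AddMonoidHom.mrange of).rootClosure

variable {M}

def toSat : M →+ sat M := of.codRestrict _ fun a => ⟨1, one_pos, a, (one_nsmul _).symm⟩

@[simp]
theorem coe_toSat (a : M) : (toSat a : GrothendieckAddGroup M) = of a := rfl

theorem toSat_eq_toSat_iff {a b : M} : toSat a = toSat b ↔ ∃ k, a + k = b + k := by
  simp only [Subtype.ext_iff, coe_toSat, of_eq_of_iff, add_comm]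

theorem exists_add_toSat_eq (x : sat M) : ∃ a b : M, x + toSat b = toSat a := by
  obtain ⟨a, b, hx⟩ := exists_add_of_eq_of (x : GrothendieckAddGroup M)
  exact ⟨a, b, Subtype.ext hx⟩

theorem exists_nsmul_eq_toSat (x : sat M) :
    ∃ n : ℕ, 0 < n ∧ ∃ a : M, n • x = toSat a := by
  obtain ⟨n, hn, a, ha⟩ := x.2
  exact ⟨n, hn, a, Subtype.ext (by simp [ha])⟩

theorem map_mem_sat {N : Type*} [AddCommMonoid N] (f : M →+ N) {x : GrothendieckAddGroup M}
    (hx : x ∈ sat M) : map f x ∈ sat N := by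
  obtain ⟨n, hn, a, ha⟩ := hx
  exact ⟨n, hn, f a, by rw [← map_nsmul, ← ha, map_of]⟩

end

variable {M : Type*} [AddCommMonoid M] {N : AddCommMonCat}

noncomputable def satLift (hN : SaturatedPred N) (f : M →+ N) : sat M →+ N :=
  (hN.equivMrangeOf.symm : _ →+ N).comp
    (((map f).comp (sat M).subtype).codRestrict _ fun x =>
      hN.rootClosure_mrange_of_le (map_mem_sat f x.2))

theorem of_satLift (hN : SaturatedPred N) (f : M →+ N) (x : sat M) :
    of (satLift hN f x) = map f x :=
  congrArg Subtype.val (hN.equivMrangeOf.apply_symm_apply _)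

theorem satLift_comp_toSat (hN : SaturatedPred N) (f : M →+ N) : (satLift hN f).comp toSat = f :=
  AddMonoidHom.ext fun a => hN.of_injective <| by
    rw [AddMonoidHom.comp_apply, of_satLift, coe_toSat, map_of]

theorem sat_hom_ext (hN : SaturatedPred N) {g₁ g₂ : sat M →+ N}
    (h : g₁.comp toSat = g₂.comp toSat) : g₁ = g₂ := by
  ext x
  obtain ⟨a, b, hx⟩ := exists_add_toSat_eq x
  have hg : ∀ g : sat M →+ N, g (toSat b) + g x = g (toSat a) := fun g => by
    rw [add_comm, ← map_add, hx]
  refine hN.1 (g₁ (toSat b)) _ _ ?_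
  calc g₁ (toSat b) + g₁ x = g₁ (toSat a) := hg g₁
    _ = g₂ (toSat a) := DFunLike.congr_fun h a
    _ = g₂ (toSat b) + g₂ x := (hg g₂).symm
    _ = g₁ (toSat b) + g₂ x := congrArg (· + g₂ x) (DFunLike.congr_fun h b).symm

open ObjectProperty

def satObj (M : AddCommMonCat) : FullSubcategory SaturatedPred :=
  ⟨.of (sat M), AddSubmonoid.saturatedPred_rootClosure _⟩

noncomputable def satHomEquiv (M : AddCommMonCat) (Y : FullSubcategory SaturatedPred) :
    (satObj M ⟶ Y) ≃ (M ⟶ (ι SaturatedPred).obj Y) where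
  toFun g := AddCommMonCat.ofHom toSat ≫ (ι SaturatedPred).map g
  invFun f := homMk (AddCommMonCat.ofHom (satLift Y.property f.hom))
  left_inv _ := InducedCategory.hom_ext <| AddCommMonCat.hom_ext <|
    sat_hom_ext Y.property (satLift_comp_toSat Y.property _)
  right_inv f := AddCommMonCat.hom_ext (satLift_comp_toSat Y.property f.hom)

noncomputable def satFunctor : AddCommMonCat ⥤ FullSubcategory SaturatedPred :=
  Adjunction.leftAdjointOfEquiv satHomEquiv fun _ _ _ _ _ => rfl

noncomputable def satAdjunction : satFunctor ⊣ ι SaturatedPred :=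
  Adjunction.adjunctionOfEquivLeft satHomEquiv fun _ _ _ _ _ => rfl

end Algebra.GrothendieckAddGroup

namespace CategoryTheory.ObjectProperty

open Limits

variable {C : Type*} [Category C] {P : ObjectProperty C} [P.IsClosedUnderIsomorphisms]
  {F : C ⥤ P.FullSubcategory}

theorem prop_of_isLimit_comp_ι (adj : F ⊣ P.ι) {J : Type*} [Category J]
    {K : J ⥤ P.FullSubcategory} {c : Cone (K ⋙ P.ι)} (hc : IsLimit c) : P c.pt := by
  let _ : Reflective P.ι := { L := F, adj := adj }
  have hret : (adj.functorialityUnit' K).app c ≫ hc.liftConeMorphism _ = 𝟙 c :=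
    hc.uniq_cone_morphism
  have hη : IsSplitMono (adj.unit.app c.pt) :=
    IsSplitMono.mk' ⟨_, congrArg ConeMorphism.hom hret⟩
  obtain ⟨Y, ⟨e⟩⟩ := @mem_essImage_of_unit_isSplitMono _ _ _ _ P.ι _ c.pt hη
  exact P.prop_of_iso e Y.property

theorem isClosedUnderLimitsOfShape_of_adjunction (adj : F ⊣ P.ι) (J : Type*) [Category J] :
    P.IsClosedUnderLimitsOfShape J where
  limitsOfShape_le := by
    rintro X ⟨p⟩
    exact prop_of_isLimit_comp_ι adj (K := P.lift p.diag p.prop_diag_obj) p.isLimit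

end CategoryTheory.ObjectProperty

open Algebra.GrothendieckAddGroup in
/-- The inclusion functor from the category of saturated commutative monoids into the
category of all commutative monoids has a left adjoint, given by
`M ↦ M^sat = { m ∈ M^gp | ∃ a ≥ 1, a • m ∈ M^int }` (characterized by: the unit
`φ : M → M^sat` identifies exactly the pairs with `a + k = b + k`, every element of
`M^sat` is a difference of elements in the image of `φ`, and every element of `M^sat`
has a positive multiple in the image of `φ`).  Consequently, the limit of any diagram of
saturated monoids is saturated. -/
theorem stmt12 :
    (∃ (F : AddCommMonCat ⥤ ObjectProperty.FullSubcategory SaturatedPred)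
        (adj : F ⊣ ObjectProperty.ι SaturatedPred),
      ∀ M : AddCommMonCat,
        (∀ a b : ↥M, adj.unit.app M a = adj.unit.app M b ↔ ∃ k : ↥M, a + k = b + k) ∧
        (∀ x : ↥((F ⋙ ObjectProperty.ι SaturatedPred).obj M),
          ∃ a b : ↥M, x + adj.unit.app M b = adj.unit.app M a) ∧
        (∀ x : ↥((F ⋙ ObjectProperty.ι SaturatedPred).obj M),
          ∃ n : ℕ, 0 < n ∧ ∃ a : ↥M, n • x = adj.unit.app M a)) ∧
    (∀ (J : Type*) [Category J] (D : J ⥤ AddCommMonCat),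
      (∀ j : J, SaturatedPred (D.obj j)) →
      ∀ (c : Limits.Cone D), Limits.IsLimit c → SaturatedPred c.pt) := by
  refine ⟨⟨satFunctor, satAdjunction, fun _ =>
    ⟨fun _ _ => toSat_eq_toSat_iff, exists_add_toSat_eq, exists_nsmul_eq_toSat⟩⟩, ?_⟩
  intro J _ D hD c hc
  have := ObjectProperty.isClosedUnderLimitsOfShape_of_adjunction satAdjunction J
  exact ObjectProperty.prop_of_isLimit _ hc hD
end

section
/- Let M be a sharp saturated commutative monoid, n ∈ M^gp \ M, and suppose ñ ∈ ⟨M, -n⟩^sat is a unit of ⟨M, -n⟩^sat, where ⟨M, -n⟩ is the submonoid of M^gp generated by M and -n. Then there exist positive integers a₁, a₂, non-negative integers b₁, b₂, and elements m₁, m₂ ∈ M with a₁·ñ = m₁ - b₁·n and -a₂·ñ = m₂ - b₂·n in M^gp; moreover any such data forces b₁ = b₂ = 0. -/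
/-!
Every element of `⟨M, -n⟩` has the form `m - b • n` with `m ∈ M`, which gives the data. Given
`a₁ • ñ = m₁ - b₁ • n` and `-(a₂ • ñ) = m₂ - b₂ • n`, eliminating `ñ` yields
`(a₂ b₁ + a₁ b₂) • n = a₂ • m₁ + a₁ • m₂ ∈ M`; as `M` is saturated and `n ∉ M`, the coefficient
`a₂ b₁ + a₁ b₂` vanishes, and since `a₁, a₂ > 0` so do `b₁` and `b₂`.
-/

lemma AddSubmonoid.exists_eq_sub_nsmul_of_mem_closure_union_neg {G : Type*} [AddCommGroup G]
    (M : AddSubmonoid G) (n : G) {x : G} (hx : x ∈ AddSubmonoid.closure ((M : Set G) ∪ {-n})) :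
    ∃ m ∈ M, ∃ b : ℕ, x = m - b • n := by
  induction hx using AddSubmonoid.closure_induction with
  | mem y hy =>
    rcases hy with hy | rfl
    · exact ⟨y, hy, 0, by simp⟩
    · exact ⟨0, M.zero_mem, 1, by simp⟩
  | zero => exact ⟨0, M.zero_mem, 0, by simp⟩
  | add y z _ _ hy hz =>
    obtain ⟨m, hm, b, rfl⟩ := hy
    obtain ⟨m', hm', b', rfl⟩ := hz
    exact ⟨m + m', M.add_mem hm hm', b + b', by rw [add_smul]; abel⟩

lemma exists_nsmul_eq_sub_nsmul_of_mem_saturationOf_closure_union_neg {G : Type*}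
    [AddCommGroup G] (M : AddSubmonoid G) (n : G) {x : G}
    (hx : x ∈ saturationOf (↑(AddSubmonoid.closure ((M : Set G) ∪ {-n})) : Set G)) :
    ∃ a : ℕ, 0 < a ∧ ∃ m ∈ M, ∃ b : ℕ, a • x = m - b • n := by
  obtain ⟨a, ha, hax⟩ := hx
  exact ⟨a, ha, M.exists_eq_sub_nsmul_of_mem_closure_union_neg n hax⟩

lemma nsmul_eq_add_of_nsmul_eq_sub_of_neg_nsmul_eq_sub {G : Type*} [AddCommGroup G]
    {x n m₁ m₂ : G} {a₁ a₂ b₁ b₂ : ℕ} (h₁ : a₁ • x = m₁ - b₁ • n)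
    (h₂ : -(a₂ • x) = m₂ - b₂ • n) :
    (a₂ * b₁ + a₁ * b₂) • n = a₂ • m₁ + a₁ • m₂ := by
  have h₁' : (a₂ * a₁) • x = a₂ • m₁ - (a₂ * b₁) • n := by rw [mul_nsmul', h₁, nsmul_sub, mul_nsmul']
  have h₂' : -((a₁ * a₂) • x) = a₁ • m₂ - (a₁ * b₂) • n := by
    rw [mul_nsmul', ← smul_neg, h₂, nsmul_sub, mul_nsmul']
  rw [mul_comm a₁ a₂] at h₂'
  have hcancel := add_neg_cancel ((a₂ * a₁) • x)
  rw [h₂', h₁'] at hcancel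
  rw [eq_comm, ← sub_eq_zero, ← hcancel, add_nsmul]
  abel

lemma eq_zero_of_nsmul_mem_of_notMem {G : Type*} [AddCommGroup G] {M : AddSubmonoid G}
    (hsat : saturationOf (M : Set G) ⊆ M) {n : G} (hn : n ∉ M) {k : ℕ} (hk : k • n ∈ M) :
    k = 0 := by
  by_contra hk₀
  exact hn (hsat ⟨k, Nat.pos_of_ne_zero hk₀, hk⟩)

theorem stmt16_general {G : Type*} [AddCommGroup G] (M : AddSubmonoid G)
    (hsat : ∀ x : G, (∃ a : ℕ, 0 < a ∧ a • x ∈ M) → x ∈ M)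
    (n : G) (hn : n ∉ M)
    (nt : G)
    (hnt : nt ∈ saturationOf (↑(AddSubmonoid.closure ((M : Set G) ∪ {-n})) : Set G))
    (hnt' : -nt ∈ saturationOf (↑(AddSubmonoid.closure ((M : Set G) ∪ {-n})) : Set G)) :
    (∃ (a₁ a₂ : ℕ), 0 < a₁ ∧ 0 < a₂ ∧ ∃ (b₁ b₂ : ℕ) (m₁ m₂ : G), m₁ ∈ M ∧ m₂ ∈ M ∧
      a₁ • nt = m₁ - b₁ • n ∧ -(a₂ • nt) = m₂ - b₂ • n) ∧
    (∀ (a₁ a₂ : ℕ), 0 < a₁ → 0 < a₂ → ∀ (b₁ b₂ : ℕ) (m₁ m₂ : G), m₁ ∈ M → m₂ ∈ M →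
      a₁ • nt = m₁ - b₁ • n → -(a₂ • nt) = m₂ - b₂ • n → b₁ = 0 ∧ b₂ = 0) := by
  have hsat' : saturationOf (M : Set G) ⊆ M := fun x hx => hsat x hx
  refine ⟨?_, fun a₁ a₂ ha₁ ha₂ b₁ b₂ m₁ m₂ hm₁ hm₂ h₁ h₂ => ?_⟩
  · obtain ⟨a₁, ha₁, m₁, hm₁, b₁, h₁⟩ :=
      exists_nsmul_eq_sub_nsmul_of_mem_saturationOf_closure_union_neg M n hnt
    obtain ⟨a₂, ha₂, m₂, hm₂, b₂, h₂⟩ :=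
      exists_nsmul_eq_sub_nsmul_of_mem_saturationOf_closure_union_neg M n hnt'
    exact ⟨a₁, a₂, ha₁, ha₂, b₁, b₂, m₁, m₂, hm₁, hm₂, h₁, by rw [← smul_neg, h₂]⟩
  · have hcoeff : a₂ * b₁ + a₁ * b₂ = 0 := eq_zero_of_nsmul_mem_of_notMem hsat' hn <| by
      rw [nsmul_eq_add_of_nsmul_eq_sub_of_neg_nsmul_eq_sub h₁ h₂]
      exact M.add_mem (M.nsmul_mem hm₁ a₂) (M.nsmul_mem hm₂ a₁)
    simp only [Nat.add_eq_zero_iff, mul_eq_zero] at hcoeff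
    exact ⟨hcoeff.1.resolve_left ha₂.ne', hcoeff.2.resolve_left ha₁.ne'⟩

/-- Let `M` be a sharp saturated commutative monoid, realized as a submonoid of its
groupification `G` (so the subgroup generated by `M` is all of `G`), let `n ∈ G \ M`,
and suppose `nt` is a unit of `⟨M, -n⟩^sat` (i.e. both `nt` and `-nt` lie in the saturation
of the submonoid of `G` generated by `M` and `-n`).  Then there exist positive integers
`a₁, a₂`, non-negative integers `b₁, b₂`, and elements `m₁, m₂ ∈ M` with
`a₁ • nt = m₁ - b₁ • n` and `-(a₂ • nt) = m₂ - b₂ • n`; moreover any such data forces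
`b₁ = b₂ = 0`. -/
theorem stmt16 {G : Type*} [AddCommGroup G] (M : AddSubmonoid G)
    (hgen : AddSubgroup.closure (M : Set G) = ⊤)
    (hsharp : ∀ x ∈ M, -x ∈ M → x = 0)
    (hsat : ∀ x : G, (∃ a : ℕ, 0 < a ∧ a • x ∈ M) → x ∈ M)
    (n : G) (hn : n ∉ M)
    (nt : G)
    (hnt : nt ∈ saturationOf (↑(AddSubmonoid.closure ((M : Set G) ∪ {-n})) : Set G))
    (hnt' : -nt ∈ saturationOf (↑(AddSubmonoid.closure ((M : Set G) ∪ {-n})) : Set G)) :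
    (∃ (a₁ a₂ : ℕ), 0 < a₁ ∧ 0 < a₂ ∧ ∃ (b₁ b₂ : ℕ) (m₁ m₂ : G), m₁ ∈ M ∧ m₂ ∈ M ∧
      a₁ • nt = m₁ - b₁ • n ∧ -(a₂ • nt) = m₂ - b₂ • n) ∧
    (∀ (a₁ a₂ : ℕ), 0 < a₁ → 0 < a₂ → ∀ (b₁ b₂ : ℕ) (m₁ m₂ : G), m₁ ∈ M → m₂ ∈ M →
      a₁ • nt = m₁ - b₁ • n → -(a₂ • nt) = m₂ - b₂ • n → b₁ = 0 ∧ b₂ = 0) :=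
  stmt16_general M hsat n hn nt hnt hnt'
end
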